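/- Suppose r̄ ≥ (4κ/3) r and τ₃ κ³ r < 1/4. Then ‖F^{1/2}(υ̃ − υ*)‖ ≤ (4/3) r, ‖D(υ̃ − υ*)‖ ≤ (4κ/3) r, and the Wilks expansion with cubic remainder holds: |2 L(υ̃) − 2 L(υ*) + ‖F^{-1/2} ξ‖²| ≤ (τ₃/2) ‖D F^{-1} ξ‖³. -/

import Mathlib

/-!
Restricted to a segment from `υ*`, the third-order bound controls the Taylor remainders of `f` and
of its directional derivative by `(τ₃/6)‖D y‖³` and `(τ₃/2)‖D y‖³`. Write `S = F^{1/2}` and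
`η = S⁻¹ξ`, so that `⟪ξ, y⟫ = ⟪η, S y⟫` and `‖D y‖ ≤ κ ‖S y‖`. On the ellipsoid `‖S y‖ = 4r/3`
the derivative of `L` at `υ* + y` in direction `y` is at least
`‖S y‖² - r ‖S y‖ - (τ₃/2)(κ ‖S y‖)³ > 0`, so by convexity the minimizer lies inside it.
The upper bound of the expansion compares `L(υ̃)` with `L(υ* - F⁻¹ξ)`; the lower bound expands `L`
at `υ̃` itself, completes the square to `‖S (υ̃ - υ*) + η‖²`, and absorbs the cubic remainder by an
elementary polynomial inequality, using `‖S (υ̃ - υ*) + η‖ ≤ 7r/3`.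
-/

open MeasureTheory RealInnerProductSpace

/-- Application of a matrix to a vector in Euclidean space. -/
noncomputable def mApp {p q : ℕ} (M : Matrix (Fin q) (Fin p) ℝ)
    (v : EuclideanSpace ℝ (Fin p)) : EuclideanSpace ℝ (Fin q) :=
  Matrix.toEuclideanLin M v

/-- Operator norm of (the Euclidean linear map induced by) a matrix. -/
noncomputable def mopNorm {p q : ℕ} (M : Matrix (Fin q) (Fin p) ℝ) : ℝ :=
  ‖(LinearMap.toContinuousLinearMap (Matrix.toEuclideanLin M))‖

open scoped ComplexOrder in
/-- The square root of a positive semidefinite matrix, as defined in the older Mathlib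
(`Matrix.PosSemidef.sqrt`, since removed). -/
noncomputable def Matrix.PosSemidef.sqrt {n 𝕜 : Type*} [Fintype n] [DecidableEq n] [RCLike 𝕜]
    {A : Matrix n n 𝕜} (hA : A.PosSemidef) : Matrix n n 𝕜 :=
  (hA.1.eigenvectorUnitary : Matrix n n 𝕜) *
    Matrix.diagonal (fun i => ((Real.sqrt (hA.1.eigenvalues i) : ℝ) : 𝕜)) *
    (star (hA.1.eigenvectorUnitary : Matrix n n 𝕜))

open Set Nat

section Taylor

theorem abs_sub_sum_iteratedDeriv_div_factorial_le {g : ℝ → ℝ} {n : ℕ}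
    (hg : ContDiff ℝ (n + 1) g) {M : ℝ}
    (hM : ∀ t ∈ Ioo (0 : ℝ) 1, |iteratedDeriv (n + 1) g t| ≤ M) :
    |g 1 - ∑ k ∈ Finset.range (n + 1), iteratedDeriv k g 0 / k !| ≤ M / (n + 1)! := by
  obtain ⟨t, ht, hrem⟩ :=
    taylor_mean_remainder_lagrange_iteratedDeriv zero_ne_one hg.contDiffOn
  have htaylor : taylorWithinEval g n (uIcc 0 1) 0 1 =
      ∑ k ∈ Finset.range (n + 1), iteratedDeriv k g 0 / k ! := by
    rw [taylor_within_apply, uIcc_of_le zero_le_one]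
    refine Finset.sum_congr rfl fun k hk => ?_
    rw [iteratedDerivWithin_eq_iteratedDeriv (uniqueDiffOn_Icc zero_lt_one)
      (hg.contDiffAt.of_le (by exact_mod_cast (Finset.mem_range.mp hk).le))
      (left_mem_Icc.mpr zero_le_one)]
    simp [div_eq_inv_mul]
  have hfac : (0 : ℝ) < (n + 1)! := mod_cast factorial_pos _
  rw [← htaylor, hrem, sub_zero, one_pow, mul_one, abs_div, abs_of_pos hfac]
  exact div_le_div_of_nonneg_right (hM t (by rwa [uIoo_of_le zero_le_one] at ht)) hfac.le

theorem ContDiff.iteratedDeriv_comp_add_smul {𝕜 E F : Type*} [NontriviallyNormedField 𝕜]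
    [NormedAddCommGroup E] [NormedSpace 𝕜 E] [NormedAddCommGroup F] [NormedSpace 𝕜 F]
    {f : E → F} {n : ℕ} (hf : ContDiff 𝕜 n f) (c y : E) {k : ℕ} (hk : k ≤ n) :
    iteratedDeriv k (fun s : 𝕜 => f (c + s • y)) =
      fun t => iteratedFDeriv 𝕜 k f (c + t • y) (fun _ => y) := by
  induction k with
  | zero => funext t; simp
  | succ k ih =>
    rw [iteratedDeriv_succ, ih (by omega)]
    funext t
    exact (hf.contDiffAt.of_le (by exact_mod_cast hk)).deriv_fderiv_add_smul

variable {E : Type*} [NormedAddCommGroup E] [NormedSpace ℝ E] {f : E → ℝ} {c y : E} {M : ℝ}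

theorem ContDiff.abs_sub_taylor_two_le (hf : ContDiff ℝ 3 f)
    (hM : ∀ t ∈ Ioo (0 : ℝ) 1, |iteratedFDeriv ℝ 3 f (c + t • y) (fun _ => y)| ≤ M) :
    |f (c + y) - (f c + fderiv ℝ f c y + iteratedFDeriv ℝ 2 f c (fun _ => y) / 2)| ≤ M / 6 := by
  have hline := fun k (hk : k ≤ 3) => hf.iteratedDeriv_comp_add_smul c y hk
  have hg : ContDiff ℝ (2 + 1) (fun s : ℝ => f (c + s • y)) := hf.comp (by fun_prop)
  have h := abs_sub_sum_iteratedDeriv_div_factorial_le (M := M) hg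
    (by rw [hline 3 le_rfl]; exact hM)
  simpa [Finset.sum_range_succ, hline, factorial] using h

theorem ContDiff.abs_fderiv_sub_taylor_one_le (hf : ContDiff ℝ 3 f)
    (hM : ∀ t ∈ Ioo (0 : ℝ) 1, |iteratedFDeriv ℝ 3 f (c + t • y) (fun _ => y)| ≤ M) :
    |fderiv ℝ f (c + y) y - (fderiv ℝ f c y + iteratedFDeriv ℝ 2 f c (fun _ => y))| ≤ M / 2 := by
  have hline := fun k (hk : k ≤ 3) => hf.iteratedDeriv_comp_add_smul c y hk
  have hg : ContDiff ℝ (2 + 1) (fun s : ℝ => f (c + s • y)) := hf.comp (by fun_prop)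
  have h := abs_sub_sum_iteratedDeriv_div_factorial_le (n := 1) (M := M) hg.deriv'
    (by rw [← iteratedDeriv_succ', hline 3 le_rfl]; exact hM)
  have hderiv : deriv (fun s : ℝ => f (c + s • y)) 1 = fderiv ℝ f (c + y) y := by
    rw [(hf.differentiable (by norm_num) _).deriv_comp_add_smul, one_smul]
  simpa [Finset.sum_range_succ, ← iteratedDeriv_succ', hline, factorial, hderiv] using h

theorem ContDiff.abs_taylor_remainders_le_of_iteratedFDeriv_le {H : Type*} [NormedAddCommGroup H]
    [NormedSpace ℝ H] (hf : ContDiff ℝ 3 f) (D : E →ₗ[ℝ] H) {τ rb : ℝ}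
    (hT3 : ∀ υ, ‖D (υ - c)‖ ≤ rb → ∀ u, |iteratedFDeriv ℝ 3 f υ (fun _ => u)| ≤ τ * ‖D u‖ ^ 3)
    (hy : ‖D y‖ ≤ rb) :
    |fderiv ℝ f (c + y) y - (fderiv ℝ f c y + iteratedFDeriv ℝ 2 f c (fun _ => y))| ≤
        τ / 2 * ‖D y‖ ^ 3 ∧
      |f (c + y) - (f c + fderiv ℝ f c y + iteratedFDeriv ℝ 2 f c (fun _ => y) / 2)| ≤
        τ / 6 * ‖D y‖ ^ 3 := by
  have hM : ∀ t ∈ Ioo (0 : ℝ) 1,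
      |iteratedFDeriv ℝ 3 f (c + t • y) (fun _ => y)| ≤ τ * ‖D y‖ ^ 3 := fun t ht =>
    hT3 _ (by
      rw [add_sub_cancel_left, map_smul, norm_smul, Real.norm_of_nonneg ht.1.le]
      exact (mul_le_of_le_one_left (norm_nonneg _) ht.2.le).trans hy) y
  exact ⟨(hf.abs_fderiv_sub_taylor_one_le hM).trans_eq (by ring),
    (hf.abs_sub_taylor_two_le hM).trans_eq (by ring)⟩

end Taylor

theorem ConvexOn.hasFDerivAt_apply_sub_le {E : Type*} [NormedAddCommGroup E] [NormedSpace ℝ E]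
    {L : E → ℝ} (hL : ConvexOn ℝ univ L) {L' : E →L[ℝ] ℝ} {y : E} (h : HasFDerivAt L L' y)
    (z : E) : L' (z - y) ≤ L z - L y := by
  have hline : HasDerivAt (L ∘ AffineMap.lineMap (k := ℝ) y z) (L' (z - y)) 0 := by
    rw [← AffineMap.lineMap_apply_zero y z (k := ℝ)] at h
    exact h.comp_hasDerivAt 0 AffineMap.hasDerivAt_lineMap
  simpa [slope_def_field] using
    (hL.comp_affineMap _).le_slope_of_hasDerivAt (mem_univ 0) (mem_univ 1) zero_lt_one hline

theorem div_three_mul_add_pow_three_le {s β ε : ℝ} (hs0 : 0 ≤ s) (hs : s ≤ 7 / 3)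
    (hβ0 : 0 ≤ β) (hβ : β ≤ 1) (hε0 : 0 ≤ ε) (hε : ε ≤ 1 / 4) :
    ε / 3 * (s + β) ^ 3 ≤ s ^ 2 + ε / 2 * β ^ 3 := by
  have e1 : ε * s * β ^ 2 ≤ 3 / 8 * s ^ 2 + 2 / 3 * ε ^ 2 * β ^ 4 := by
    nlinarith [sq_nonneg (3 / 4 * s - ε * β ^ 2)]
  have e2 : ε ^ 2 * β ^ 4 ≤ ε / 4 * β ^ 3 := by
    have h1 : ε * β ≤ 1 / 4 := by nlinarith
    nlinarith [mul_le_mul_of_nonneg_left h1 (by positivity : 0 ≤ ε * β ^ 3)]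
  have e3 : ε * s ^ 2 * β ≤ 1 / 4 * s ^ 2 := by
    nlinarith [mul_nonneg (mul_nonneg hε0 hs0) hs0, mul_nonneg (sq_nonneg s) hβ0]
  have e4 : ε / 3 * s ^ 3 ≤ 7 / 36 * s ^ 2 := by nlinarith [mul_nonneg (mul_nonneg hε0 hs0) hs0]
  nlinarith

theorem div_three_mul_mul_add_pow_three_le {κ r τ q B : ℝ} (hκ : 0 < κ) (hr : 0 < r)
    (hτ : 0 ≤ τ) (hsmall : τ * κ ^ 3 * r ≤ 1 / 4) (hq0 : 0 ≤ q) (hq : q ≤ 7 / 3 * r)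
    (hB0 : 0 ≤ B) (hB : B ≤ κ * r) :
    τ / 3 * (κ * q + B) ^ 3 ≤ q ^ 2 + τ / 2 * B ^ 3 := by
  have h := div_three_mul_add_pow_three_le (s := q / r) (β := B / (κ * r)) (ε := τ * κ ^ 3 * r)
    (by positivity) ((div_le_iff₀ hr).mpr hq) (by positivity)
    ((div_le_one (by positivity)).mpr hB) (by positivity) hsmall
  have hlhs : τ / 3 * (κ * q + B) ^ 3 =
      r ^ 2 * (τ * κ ^ 3 * r / 3 * (q / r + B / (κ * r)) ^ 3) := by
    field_simp
  have hrhs : q ^ 2 + τ / 2 * B ^ 3 =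
      r ^ 2 * ((q / r) ^ 2 + τ * κ ^ 3 * r / 2 * (B / (κ * r)) ^ 3) := by
    field_simp
  rw [hlhs, hrhs]
  exact mul_le_mul_of_nonneg_left h (sq_nonneg r)

section Wilks

variable {E G H : Type*} [NormedAddCommGroup E] [InnerProductSpace ℝ E]
  [NormedAddCommGroup G] [InnerProductSpace ℝ G] [NormedAddCommGroup H] [NormedSpace ℝ H]
  {f : E → ℝ} {S : E →ₗ[ℝ] G} {D : E →ₗ[ℝ] H} {ξ υs υt u : E} {η : G} {κ τ r rb : ℝ}

theorem wilks_directional_deriv_pos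
    (hderiv : ∀ y, ‖D y‖ ≤ rb → |fderiv ℝ f (υs + y) y - ‖S y‖ ^ 2| ≤ τ / 2 * ‖D y‖ ^ 3)
    (hξ : ∀ v, ⟪ξ, v⟫ = ⟪η, S v⟫) (hη : ‖η‖ ≤ r) (hDS : ∀ v, ‖D v‖ ≤ κ * ‖S v‖)
    (hτ : 0 ≤ τ) (hr : 0 < r) (hrb : 4 * κ / 3 * r ≤ rb) (hsmall : τ * κ ^ 3 * r < 1 / 4)
    {y : E} (hy : ‖S y‖ = 4 / 3 * r) : 0 < fderiv ℝ f (υs + y) y + ⟪ξ, y⟫ := by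
  have hDy : ‖D y‖ ≤ κ * (4 / 3 * r) := hy ▸ hDS y
  have hT := hderiv y (hDy.trans (by linarith))
  rw [hy] at hT
  have hlin : |⟪ξ, y⟫| ≤ r * (4 / 3 * r) := by
    rw [hξ, ← hy]
    exact (abs_real_inner_le_norm _ _).trans (by gcongr)
  have hcube : τ / 2 * ‖D y‖ ^ 3 < 8 / 27 * r ^ 2 :=
    calc τ / 2 * ‖D y‖ ^ 3 ≤ τ / 2 * (κ * (4 / 3 * r)) ^ 3 := by gcongr
      _ = τ * κ ^ 3 * r * (32 / 27 * r ^ 2) := by ring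
      _ < 1 / 4 * (32 / 27 * r ^ 2) := by gcongr
      _ = 8 / 27 * r ^ 2 := by ring
  linarith [abs_le.mp hT, abs_le.mp hlin]

theorem wilks_localization (hconv : ConvexOn ℝ univ f) (hf : Differentiable ℝ f)
    (hderiv : ∀ y, ‖D y‖ ≤ rb → |fderiv ℝ f (υs + y) y - ‖S y‖ ^ 2| ≤ τ / 2 * ‖D y‖ ^ 3)
    (hmin : ∀ υ, f υt + ⟪ξ, υt⟫ ≤ f υ + ⟪ξ, υ⟫)
    (hξ : ∀ v, ⟪ξ, v⟫ = ⟪η, S v⟫) (hη : ‖η‖ ≤ r) (hDS : ∀ v, ‖D v‖ ≤ κ * ‖S v‖)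
    (hτ : 0 ≤ τ) (hr : 0 < r) (hrb : 4 * κ / 3 * r ≤ rb) (hsmall : τ * κ ^ 3 * r < 1 / 4) :
    ‖S (υt - υs)‖ ≤ 4 / 3 * r := by
  set x := υt - υs
  by_contra! hx
  have hx0 : 0 < ‖S x‖ := lt_trans (by positivity) hx
  set t := 4 / 3 * r / ‖S x‖
  have ht0 : 0 < t := by positivity
  have ht1 : t < 1 := (div_lt_one hx0).mpr hx
  set d := fderiv ℝ f (υs + t • x) x + ⟪ξ, x⟫
  have hpos : 0 < t * d := by
    have hSy : ‖S (t • x)‖ = 4 / 3 * r := by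
      rw [map_smul, norm_smul, Real.norm_of_nonneg ht0.le, div_mul_cancel₀ _ hx0.ne']
    have h := wilks_directional_deriv_pos hderiv hξ hη hDS hτ hr hrb hsmall hSy
    rwa [map_smul, real_inner_smul_right, smul_eq_mul, ← mul_add] at h
  have hnonpos : (1 - t) * d ≤ 0 := by
    have hL : HasFDerivAt (fun υ => f υ + ⟪ξ, υ⟫) (fderiv ℝ f (υs + t • x) + innerSL ℝ ξ)
        (υs + t • x) := (hf _).hasFDerivAt.add (innerSL ℝ ξ).hasFDerivAt
    have h := (hconv.add ((innerₛₗ ℝ ξ).convexOn convex_univ)).hasFDerivAt_apply_sub_le hL υt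
    have hdir : υt - (υs + t • x) = (1 - t) • x := by
      rw [sub_smul, one_smul]; simp only [x]; abel
    have hlhs : (fderiv ℝ f (υs + t • x) + innerSL ℝ ξ) ((1 - t) • x) = (1 - t) * d := by
      simp only [map_smul, smul_eq_mul, d]
      rfl
    rw [hdir, hlhs] at h
    change (1 - t) * d ≤ f υt + ⟪ξ, υt⟫ - (f (υs + t • x) + ⟪ξ, υs + t • x⟫) at h
    linarith [hmin (υs + t • x)]
  have hd : 0 < d := pos_of_mul_pos_right hpos ht0.le
  linarith [mul_pos (sub_pos.mpr ht1) hd]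

theorem wilks_excess_le
    (hval : ∀ y, ‖D y‖ ≤ rb → |f (υs + y) - (f υs + ‖S y‖ ^ 2 / 2)| ≤ τ / 6 * ‖D y‖ ^ 3)
    (hmin : ∀ υ, f υt + ⟪ξ, υt⟫ ≤ f υ + ⟪ξ, υ⟫) (hξ : ∀ v, ⟪ξ, v⟫ = ⟪η, S v⟫) (hSu : S u = η)
    (hDu : ‖D u‖ ≤ rb) :
    2 * (f υt + ⟪ξ, υt⟫) - 2 * (f υs + ⟪ξ, υs⟫) + ‖η‖ ^ 2 ≤ τ / 3 * ‖D u‖ ^ 3 := by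
  have hT := hval (-u) (by rwa [map_neg, norm_neg])
  rw [map_neg, map_neg, norm_neg, norm_neg, hSu] at hT
  have hξu : ⟪ξ, υs + -u⟫ = ⟪ξ, υs⟫ - ‖η‖ ^ 2 := by
    rw [inner_add_right, inner_neg_right, hξ u, hSu, real_inner_self_eq_norm_sq, sub_eq_add_neg]
  linarith [hmin (υs + -u), (abs_le.mp hT).2]

theorem wilks_excess_ge
    (hval : ∀ y, ‖D y‖ ≤ rb → |f (υs + y) - (f υs + ‖S y‖ ^ 2 / 2)| ≤ τ / 6 * ‖D y‖ ^ 3)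
    (hξ : ∀ v, ⟪ξ, v⟫ = ⟪η, S v⟫) (hSu : S u = η) (hη : ‖η‖ ≤ r)
    (hDS : ∀ v, ‖D v‖ ≤ κ * ‖S v‖) (hloc : ‖S (υt - υs)‖ ≤ 4 / 3 * r)
    (hDx : ‖D (υt - υs)‖ ≤ rb) (hDu : ‖D u‖ ≤ κ * r) (hκ : 0 < κ) (hτ : 0 ≤ τ) (hr : 0 < r)
    (hsmall : τ * κ ^ 3 * r ≤ 1 / 4) :
    -(τ / 2 * ‖D u‖ ^ 3) ≤ 2 * (f υt + ⟪ξ, υt⟫) - 2 * (f υs + ⟪ξ, υs⟫) + ‖η‖ ^ 2 := by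
  set x := υt - υs
  have hT := hval x hDx
  rw [add_sub_cancel] at hT
  have hsq : ‖S x‖ ^ 2 + 2 * ⟪ξ, x⟫ + ‖η‖ ^ 2 = ‖S x + η‖ ^ 2 := by
    rw [hξ, norm_add_sq_real, real_inner_comm]
  have hq : ‖S x + η‖ ≤ 7 / 3 * r :=
    calc ‖S x + η‖ ≤ ‖S x‖ + ‖η‖ := norm_add_le _ _
      _ ≤ 4 / 3 * r + r := add_le_add hloc hη
      _ = 7 / 3 * r := by ring
  have hDx' : ‖D x‖ ≤ κ * ‖S x + η‖ + ‖D u‖ :=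
    calc ‖D x‖ = ‖D (x + u) - D u‖ := by rw [map_add, add_sub_cancel_right]
      _ ≤ ‖D (x + u)‖ + ‖D u‖ := norm_sub_le _ _
      _ ≤ κ * ‖S x + η‖ + ‖D u‖ := by rw [← hSu, ← map_add]; gcongr; exact hDS _
  have hcube : τ / 3 * ‖D x‖ ^ 3 ≤ ‖S x + η‖ ^ 2 + τ / 2 * ‖D u‖ ^ 3 :=
    calc τ / 3 * ‖D x‖ ^ 3 ≤ τ / 3 * (κ * ‖S x + η‖ + ‖D u‖) ^ 3 := by gcongr
      _ ≤ ‖S x + η‖ ^ 2 + τ / 2 * ‖D u‖ ^ 3 := div_three_mul_mul_add_pow_three_le hκ hr hτ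
          hsmall (norm_nonneg _) hq (norm_nonneg _) hDu
  have hξx : ⟪ξ, υt⟫ = ⟪ξ, υs⟫ + ⟪ξ, x⟫ := by rw [← inner_add_right, add_sub_cancel]
  linarith [(abs_le.mp hT).1]

theorem wilks_expansion_of_hessian_eq_norm_sq (hconv : ConvexOn ℝ univ f) (hf : ContDiff ℝ 3 f)
    (hcrit : fderiv ℝ f υs = 0) (hQ : ∀ y, iteratedFDeriv ℝ 2 f υs (fun _ => y) = ‖S y‖ ^ 2)
    (hT3 : ∀ υ, ‖D (υ - υs)‖ ≤ rb → ∀ u, |iteratedFDeriv ℝ 3 f υ (fun _ => u)| ≤ τ * ‖D u‖ ^ 3)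
    (hmin : ∀ υ, f υt + ⟪ξ, υt⟫ ≤ f υ + ⟪ξ, υ⟫) (hξ : ∀ v, ⟪ξ, v⟫ = ⟪η, S v⟫) (hSu : S u = η)
    (hη : ‖η‖ ≤ r) (hDS : ∀ v, ‖D v‖ ≤ κ * ‖S v‖) (hκ : 0 < κ) (hτ : 0 ≤ τ) (hr : 0 < r)
    (hrb : 4 * κ / 3 * r ≤ rb) (hsmall : τ * κ ^ 3 * r < 1 / 4) :
    ‖S (υt - υs)‖ ≤ 4 / 3 * r ∧ ‖D (υt - υs)‖ ≤ 4 * κ / 3 * r ∧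
      |2 * (f υt + ⟪ξ, υt⟫) - 2 * (f υs + ⟪ξ, υs⟫) + ‖η‖ ^ 2| ≤ τ / 2 * ‖D u‖ ^ 3 := by
  have hTaylor := fun y (hy : ‖D y‖ ≤ rb) =>
    hf.abs_taylor_remainders_le_of_iteratedFDeriv_le D hT3 hy
  simp only [hcrit, hQ, zero_apply, zero_add, add_zero] at hTaylor
  have hloc := wilks_localization hconv (hf.differentiable (by norm_num))
    (fun y hy => (hTaylor y hy).1) hmin hξ hη hDS hτ hr hrb hsmall
  have hDx : ‖D (υt - υs)‖ ≤ 4 * κ / 3 * r :=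
    (hDS _).trans ((mul_le_mul_of_nonneg_left hloc hκ.le).trans_eq (by ring))
  have hDu : ‖D u‖ ≤ κ * r := (hDS u).trans (by rw [hSu]; gcongr)
  have hval := fun y hy => (hTaylor y hy).2
  refine ⟨hloc, hDx, abs_le.mpr ⟨?_, ?_⟩⟩
  · exact wilks_excess_ge hval hξ hSu hη hDS hloc (hDx.trans hrb) hDu hκ hτ hr hsmall.le
  · have hcube : 0 ≤ τ * ‖D u‖ ^ 3 := by positivity
    linarith [wilks_excess_le hval hmin hξ hSu (hDu.trans (by nlinarith))]

end Wilks

namespace Matrix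

open scoped ComplexOrder

variable {n 𝕜 : Type*} [Fintype n] [DecidableEq n] [RCLike 𝕜] {A : Matrix n n 𝕜}

theorem PosSemidef.sqrt_isHermitian (hA : A.PosSemidef) : hA.sqrt.IsHermitian := by
  simp [PosSemidef.sqrt, IsHermitian, conjTranspose_mul, star_eq_conjTranspose, mul_assoc,
    diagonal_conjTranspose, Pi.star_def]

theorem PosSemidef.sqrt_mul_self (hA : A.PosSemidef) : hA.sqrt * hA.sqrt = A := by
  set U : Matrix n n 𝕜 := (hA.1.eigenvectorUnitary : Matrix n n 𝕜)
  set Λ : Matrix n n 𝕜 := diagonal fun i => ((Real.sqrt (hA.1.eigenvalues i) : ℝ) : 𝕜)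
  have hU : star U * U = 1 := Unitary.coe_star_mul_self _
  have hΛ : Λ * Λ = diagonal (RCLike.ofReal ∘ hA.1.eigenvalues) := by
    rw [diagonal_mul_diagonal]
    congr 1
    funext i
    simp [← RCLike.ofReal_mul, Real.mul_self_sqrt (hA.eigenvalues_nonneg i)]
  conv_rhs => rw [hA.1.spectral_theorem, Unitary.conjStarAlgAut_apply]
  calc hA.sqrt * hA.sqrt = U * (Λ * (star U * U) * Λ) * star U := by
        simp only [PosSemidef.sqrt, U, Λ, mul_assoc]
    _ = _ := by rw [hU, mul_one, hΛ]

end Matrix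

section EuclideanMatrix

variable {p : ℕ}

theorem mApp_mul {m q : ℕ} (A : Matrix (Fin m) (Fin q) ℝ) (B : Matrix (Fin q) (Fin p) ℝ)
    (v : EuclideanSpace ℝ (Fin p)) : mApp (A * B) v = mApp A (mApp B v) := by
  simp [mApp]

theorem mApp_one (v : EuclideanSpace ℝ (Fin p)) : mApp 1 v = v := by
  simp [mApp]

theorem mApp_mApp_inv_of_mul_self_eq {S F : Matrix (Fin p) (Fin p) ℝ} (hdet : IsUnit S.det)
    (hSS : S * S = F) (ξ : EuclideanSpace ℝ (Fin p)) : mApp S (mApp F⁻¹ ξ) = mApp S⁻¹ ξ := by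
  rw [← mApp_mul, ← hSS, Matrix.mul_inv_rev, ← mul_assoc, Matrix.mul_nonsing_inv S hdet, one_mul]

namespace Matrix

theorem IsHermitian.inner_mApp_left {M : Matrix (Fin p) (Fin p) ℝ} (hM : M.IsHermitian)
    (u v : EuclideanSpace ℝ (Fin p)) : ⟪mApp M u, v⟫ = ⟪u, mApp M v⟫ :=
  isSymmetric_toEuclideanLin_iff.mpr hM u v

theorem IsHermitian.inner_mApp_mul_self {S : Matrix (Fin p) (Fin p) ℝ} (hS : S.IsHermitian)
    (v : EuclideanSpace ℝ (Fin p)) : ⟪mApp (S * S) v, v⟫ = ‖mApp S v‖ ^ 2 := by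
  rw [mApp_mul, hS.inner_mApp_left, real_inner_self_eq_norm_sq]

theorem IsHermitian.inner_eq_inner_mApp_inv {S : Matrix (Fin p) (Fin p) ℝ}
    (hS : S.IsHermitian) (hdet : IsUnit S.det) (ξ v : EuclideanSpace ℝ (Fin p)) :
    ⟪ξ, v⟫ = ⟪mApp S⁻¹ ξ, mApp S v⟫ := by
  rw [hS.inv.inner_mApp_left, ← mApp_mul, nonsing_inv_mul S hdet, mApp_one]

theorem PosSemidef.inner_mApp_self_nonneg {M : Matrix (Fin p) (Fin p) ℝ} (hM : M.PosSemidef)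
    (v : EuclideanSpace ℝ (Fin p)) : 0 ≤ ⟪mApp M v, v⟫ := by
  simpa [mApp, toLpLin_apply, PiLp.inner_apply, dotProduct, mul_comm] using
    hM.dotProduct_mulVec_nonneg v

theorem IsHermitian.norm_mApp_le_of_posSemidef {S F D : Matrix (Fin p) (Fin p) ℝ}
    (hS : S.IsHermitian) (hSS : S * S = F) (hD : D.IsHermitian) {κ : ℝ} (hκ : 0 ≤ κ)
    (h : (κ ^ 2 • F - D * D).PosSemidef) (v : EuclideanSpace ℝ (Fin p)) :
    ‖mApp D v‖ ≤ κ * ‖mApp S v‖ := by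
  have h0 := h.inner_mApp_self_nonneg v
  have hsplit : mApp (κ ^ 2 • F - D * D) v = κ ^ 2 • mApp (S * S) v - mApp (D * D) v := by
    simp [mApp, hSS]
  rw [hsplit, inner_sub_left, real_inner_smul_left, hS.inner_mApp_mul_self,
    hD.inner_mApp_mul_self] at h0
  exact (pow_le_pow_iff_left₀ (norm_nonneg _) (by positivity) two_ne_zero).mp (by linarith)

end Matrix

end EuclideanMatrix

theorem wilks_expansion_third_order_general
    {p : ℕ}
    (f : EuclideanSpace ℝ (Fin p) → ℝ)
    (hconv : ConvexOn ℝ Set.univ f)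
    (hf : ContDiff ℝ 3 f)
    (υs : EuclideanSpace ℝ (Fin p))
    (hgrad : gradient f υs = 0)
    (F : Matrix (Fin p) (Fin p) ℝ) (hF : F.PosDef)
    (hFdef : ∀ u w : EuclideanSpace ℝ (Fin p),
      iteratedFDeriv ℝ 2 f υs ![u, w] = ⟪mApp F u, w⟫)
    (D : Matrix (Fin p) (Fin p) ℝ) (hD : D.PosDef)
    (κ : ℝ) (hκ : 0 < κ)
    (hLoew : (κ ^ 2 • F - D * D).PosSemidef)
    (τ3 rb : ℝ) (hτ3 : 0 < τ3)
    (hT3 : ∀ υ : EuclideanSpace ℝ (Fin p), ‖mApp D (υ - υs)‖ ≤ rb →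
      ∀ u w : EuclideanSpace ℝ (Fin p),
        |iteratedFDeriv ℝ 3 f υ ![u, u, w]| ≤ τ3 * ‖mApp D u‖ ^ 2 * ‖mApp D w‖)
    (ξ υt : EuclideanSpace ℝ (Fin p))
    (hmin : ∀ υ : EuclideanSpace ℝ (Fin p), f υt + ⟪ξ, υt⟫ ≤ f υ + ⟪ξ, υ⟫)
    (r : ℝ) (hrpos : 0 < r)
    (hξr : ‖mApp (Matrix.PosSemidef.sqrt hF.posSemidef)⁻¹ ξ‖ ≤ r)
    (h1 : rb ≥ 4 * κ / 3 * r) (h2 : τ3 * κ ^ 3 * r < 1 / 4) :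
    ‖mApp (Matrix.PosSemidef.sqrt hF.posSemidef) (υt - υs)‖ ≤ 4 / 3 * r ∧
    ‖mApp D (υt - υs)‖ ≤ 4 * κ / 3 * r ∧
    |2 * (f υt + ⟪ξ, υt⟫) - 2 * (f υs + ⟪ξ, υs⟫) + ‖mApp (Matrix.PosSemidef.sqrt hF.posSemidef)⁻¹ ξ‖ ^ 2| ≤
      τ3 / 2 * ‖mApp D (mApp F⁻¹ ξ)‖ ^ 3 := by
  set S := hF.posSemidef.sqrt
  have hSS : S * S = F := hF.posSemidef.sqrt_mul_self
  have hS : S.IsHermitian := hF.posSemidef.sqrt_isHermitian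
  have hSdet : IsUnit S.det := isUnit_of_mul_isUnit_left <| by
    rw [← Matrix.det_mul, hSS]; exact (Matrix.isUnit_iff_isUnit_det F).mp hF.isUnit
  have hQ : ∀ y, iteratedFDeriv ℝ 2 f υs (fun _ => y) = ‖mApp S y‖ ^ 2 := fun y => by
    simpa [Matrix.vec_single_eq_const, Matrix.vecCons_const, ← hSS, hS.inner_mApp_mul_self]
      using hFdef y y
  have hT3' : ∀ υ, ‖mApp D (υ - υs)‖ ≤ rb →
      ∀ u, |iteratedFDeriv ℝ 3 f υ (fun _ => u)| ≤ τ3 * ‖mApp D u‖ ^ 3 := fun υ hυ u => by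
    simpa [Matrix.vec_single_eq_const, Matrix.vecCons_const, pow_succ, mul_assoc] using
      hT3 υ hυ u u
  exact wilks_expansion_of_hessian_eq_norm_sq (S := Matrix.toEuclideanLin S)
    (D := Matrix.toEuclideanLin D) hconv hf (by rw [← toDual_gradient, hgrad, map_zero]) hQ hT3'
    hmin (hS.inner_eq_inner_mApp_inv hSdet ξ) (mApp_mApp_inv_of_mul_self_eq hSdet hSS ξ)
    hξr (hS.norm_mApp_le_of_posSemidef hSS hD.1 hκ.le hLoew) hκ hτ3.le hrpos h1 h2

theorem wilks_expansion_third_order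
    {p : ℕ} (hp : 1 ≤ p)
    (f : EuclideanSpace ℝ (Fin p) → ℝ)
    (hconv : ConvexOn ℝ Set.univ f)
    (hf : ContDiff ℝ 3 f)
    (υs : EuclideanSpace ℝ (Fin p))
    (hgrad : gradient f υs = 0)
    (F : Matrix (Fin p) (Fin p) ℝ) (hF : F.PosDef)
    (hFdef : ∀ u w : EuclideanSpace ℝ (Fin p),
      iteratedFDeriv ℝ 2 f υs ![u, w] = ⟪mApp F u, w⟫)
    (D : Matrix (Fin p) (Fin p) ℝ) (hD : D.PosDef)
    (κ : ℝ) (hκ : 0 < κ)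
    (hLoew : (κ ^ 2 • F - D * D).PosSemidef)
    (τ3 rb : ℝ) (hτ3 : 0 < τ3) (hrb : 0 < rb)
    (hT3 : ∀ υ : EuclideanSpace ℝ (Fin p), ‖mApp D (υ - υs)‖ ≤ rb →
      ∀ u w : EuclideanSpace ℝ (Fin p),
        |iteratedFDeriv ℝ 3 f υ ![u, u, w]| ≤ τ3 * ‖mApp D u‖ ^ 2 * ‖mApp D w‖)
    (ξ υt : EuclideanSpace ℝ (Fin p))
    (hmin : ∀ υ : EuclideanSpace ℝ (Fin p), f υt + ⟪ξ, υt⟫ ≤ f υ + ⟪ξ, υ⟫)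
    (r : ℝ) (hrpos : 0 < r)
    (hξr : ‖mApp (Matrix.PosSemidef.sqrt hF.posSemidef)⁻¹ ξ‖ ≤ r)
    (h1 : rb ≥ 4 * κ / 3 * r) (h2 : τ3 * κ ^ 3 * r < 1 / 4) :
    ‖mApp (Matrix.PosSemidef.sqrt hF.posSemidef) (υt - υs)‖ ≤ 4 / 3 * r ∧
    ‖mApp D (υt - υs)‖ ≤ 4 * κ / 3 * r ∧
    |2 * (f υt + ⟪ξ, υt⟫) - 2 * (f υs + ⟪ξ, υs⟫) + ‖mApp (Matrix.PosSemidef.sqrt hF.posSemidef)⁻¹ ξ‖ ^ 2| ≤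
      τ3 / 2 * ‖mApp D (mApp F⁻¹ ξ)‖ ^ 3 :=
  wilks_expansion_third_order_general f hconv hf υs hgrad F hF hFdef D hD κ hκ hLoew τ3 rb hτ3 hT3 ξ
    υt hmin r hrpos hξr h1 h2
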